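/- arXiv:1306.0717 — 3 statements merged into one kernel-verified Lean document; each statement's English description precedes it below -/
import Mathlib

section
/- For all real numbers a, b, c, k, the matrix 1 - k•U₃(a,b,c) is invertible, and the Cayley transform satisfies (1 - k•U₃)⁻¹ * (1 + k•U₃) = 1 + (2/(1 + k²(a² + b² + c²))) • (k•U₃ + k²•U₃²). -/
/-!
The skew matrix `U = U₃(a,b,c)` satisfies `U³ = -(a² + b² + c²) U` (Cayley–Hamilton: its
characteristic polynomial is `X³ + (a² + b² + c²) X`). Any `A` with `A³ = -σ A` has
`(1 - A)(1 + u (A + A²)) = 1 + (u (1 + σ) - 1) A`, so for `1 + σ ≠ 0` the choices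
`u = 1/(1 + σ)` and `u = 2/(1 + σ)` give the inverse of `1 - A` and its Cayley transform.
Take `A = kU`, `σ = k² (a² + b² + c²)`.
-/

/-- The 3×3 real antisymmetric matrix `U₃(a,b,c)`. -/
def U₃ (a b c : ℝ) : Matrix (Fin 3) (Fin 3) ℝ := !![0, -c, b; c, 0, -a; -b, a, 0]

section CubeEqNegSMul

variable {𝕜 R : Type*} [CommRing 𝕜] [Ring R] [Algebra 𝕜 R] {A : R} {σ : 𝕜}

theorem one_sub_mul_one_add_smul_add_sq (hA : A ^ 3 = -σ • A) (u : 𝕜) :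
    (1 - A) * (1 + u • (A + A ^ 2)) = 1 + (u * (1 + σ) - 1) • A := by
  have hsq : A * A = A ^ 2 := (sq A).symm
  have hcube : A * A ^ 2 = A ^ 3 := (pow_succ' A 2).symm
  simp only [sub_mul, one_mul, mul_add, mul_one, mul_smul_comm, hsq, hcube, hA]
  module

variable {K : Type*} [Field K] {n : Type*} [Fintype n] [DecidableEq n]
  {M : Matrix n n K} {τ : K}

theorem Matrix.isUnit_one_sub_of_pow_three_eq_neg_smul (hM : M ^ 3 = -τ • M)
    (hτ : 1 + τ ≠ 0) : IsUnit (1 - M) :=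
  IsUnit.of_mul_eq_one (1 + (1 + τ)⁻¹ • (M + M ^ 2)) <| by
    rw [one_sub_mul_one_add_smul_add_sq hM, inv_mul_cancel₀ hτ, sub_self, zero_smul, add_zero]

theorem Matrix.inv_one_sub_mul_one_add_of_pow_three_eq_neg_smul (hM : M ^ 3 = -τ • M)
    (hτ : 1 + τ ≠ 0) :
    (1 - M)⁻¹ * (1 + M) = 1 + (2 / (1 + τ)) • (M + M ^ 2) := by
  have hcayley : (1 - M) * (1 + (2 / (1 + τ)) • (M + M ^ 2)) = 1 + M := by
    rw [one_sub_mul_one_add_smul_add_sq hM, div_mul_cancel₀ 2 hτ]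
    norm_num
  have hdet : IsUnit (1 - M).det :=
    (Matrix.isUnit_iff_isUnit_det _).mp (isUnit_one_sub_of_pow_three_eq_neg_smul hM hτ)
  rw [← hcayley, Matrix.nonsing_inv_mul_cancel_left _ _ hdet]

end CubeEqNegSMul

theorem U₃_pow_three (a b c : ℝ) : U₃ a b c ^ 3 = -(a ^ 2 + b ^ 2 + c ^ 2) • U₃ a b c := by
  ext i j
  fin_cases i <;> fin_cases j <;> simp [U₃, pow_succ] <;> ring

/-- For all real `a, b, c, k`, the matrix `1 - k•U₃(a,b,c)` is invertible, and the Cayley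
transform satisfies
`(1 - k•U₃)⁻¹ * (1 + k•U₃) = 1 + (2/(1 + k²(a² + b² + c²))) • (k•U₃ + k²•U₃²)`. -/
theorem cayley_U₃_formula (a b c k : ℝ) :
    IsUnit (1 - k • U₃ a b c) ∧
    (1 - k • U₃ a b c)⁻¹ * (1 + k • U₃ a b c)
      = 1 + (2 / (1 + k ^ 2 * (a ^ 2 + b ^ 2 + c ^ 2))) •
          (k • U₃ a b c + k ^ 2 • (U₃ a b c) ^ 2) := by
  have hcube : (k • U₃ a b c) ^ 3 = -(k ^ 2 * (a ^ 2 + b ^ 2 + c ^ 2)) • (k • U₃ a b c) := by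
    rw [smul_pow, U₃_pow_three, smul_smul, smul_smul]
    ring_nf
  have hσ : 1 + k ^ 2 * (a ^ 2 + b ^ 2 + c ^ 2) ≠ 0 := by positivity
  rw [← smul_pow]
  exact ⟨Matrix.isUnit_one_sub_of_pow_three_eq_neg_smul hcube hσ,
    Matrix.inv_one_sub_mul_one_add_of_pow_three_eq_neg_smul hcube hσ⟩
end

section
/- Let a, b, c be real numbers with a² + b² + c² = 1, let ϑ be a real number with sin ϑ ≠ 0, and set k = (1 - cos ϑ)/sin ϑ. Then (1 - k•U₃(a,b,c))⁻¹ * (1 + k•U₃(a,b,c)) = 1 + sin ϑ • U₃(a,b,c) + (1 - cos ϑ) • U₃(a,b,c)²; that is, the Cayley transform of -kU₃ is the rotation by angle ϑ about the axis (a,b,c). -/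
section CubeEqNeg

variable {A : Type*} [Ring A] {X : A}

theorem one_sub_smul_mul_eq_one_add_smul_of_pow_three_eq_neg {R : Type*} [CommRing R]
    [Algebra R A] (hX : X ^ 3 = -X) {k s c : R} (hks : k * s = 1 - c) (hkc : k * (1 + c) = s) :
    (1 - k • X) * (1 + s • X + (1 - c) • X ^ 2) = 1 + k • X := by
  have expand : (1 - k • X) * (1 + s • X + (1 - c) • X ^ 2)
      = 1 + (s - k) • X + (1 - c - k * s) • X ^ 2 - (k * (1 - c)) • X ^ 3 := by
    noncomm_ring
    match_scalars <;> ring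
  rw [expand, hX]
  match_scalars
  · ring
  · linear_combination -hkc
  · linear_combination -hks

theorem one_sub_smul_mul_eq_one_of_pow_three_eq_neg {K : Type*} [Field K] [Algebra K A]
    (hX : X ^ 3 = -X) {k : K} (hk : 1 + k ^ 2 ≠ 0) :
    (1 - k • X) * ((1 + k • X) * (1 + (k ^ 2 / (1 + k ^ 2)) • X ^ 2)) = 1 := by
  have hX4 : X ^ 4 = -X ^ 2 := by rw [pow_succ, hX, neg_mul, ← pow_two]
  have expand : (1 - k • X) * ((1 + k • X) * (1 + (k ^ 2 / (1 + k ^ 2)) • X ^ 2))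
      = 1 + (k ^ 2 / (1 + k ^ 2) - k ^ 2) • X ^ 2 - (k ^ 2 * (k ^ 2 / (1 + k ^ 2))) • X ^ 4 := by
    noncomm_ring
    match_scalars <;> ring
  rw [expand, hX4]
  match_scalars
  · ring
  · field_simp
    ring

end CubeEqNeg

theorem Matrix.inv_one_sub_smul_mul_one_add_smul_of_pow_three_eq_neg {n K : Type*} [Fintype n]
    [DecidableEq n] [Field K] {X : Matrix n n K} (hX : X ^ 3 = -X) {k s c : K}
    (hk : 1 + k ^ 2 ≠ 0) (hks : k * s = 1 - c) (hkc : k * (1 + c) = s) :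
    (1 - k • X)⁻¹ * (1 + k • X) = 1 + s • X + (1 - c) • X ^ 2 := by
  have hdet : IsUnit (1 - k • X).det :=
    isUnit_det_of_right_inverse (one_sub_smul_mul_eq_one_of_pow_three_eq_neg hX hk)
  rw [← one_sub_smul_mul_eq_one_add_smul_of_pow_three_eq_neg hX hks hkc]
  exact nonsing_inv_mul_cancel_left _ _ hdet

/-- For `a² + b² + c² = 1`, `sin ϑ ≠ 0` and `k = (1 - cos ϑ)/sin ϑ`, the Cayley transform
of `-kU₃(a,b,c)` is the rotation by angle `ϑ` about the axis `(a,b,c)`: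
`(1 - k•U₃)⁻¹ * (1 + k•U₃) = 1 + sin ϑ • U₃ + (1 - cos ϑ) • U₃²`. -/
theorem cayley_U₃_eq_rotation (a b c : ℝ) (h : a ^ 2 + b ^ 2 + c ^ 2 = 1)
    (ϑ : ℝ) (hs : Real.sin ϑ ≠ 0) (k : ℝ) (hk : k = (1 - Real.cos ϑ) / Real.sin ϑ) :
    (1 - k • U₃ a b c)⁻¹ * (1 + k • U₃ a b c)
      = 1 + Real.sin ϑ • U₃ a b c + (1 - Real.cos ϑ) • (U₃ a b c) ^ 2 := by
  have hU : U₃ a b c ^ 3 = -U₃ a b c := by rw [U₃_pow_three, h, neg_one_smul]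
  have hks : k * Real.sin ϑ = 1 - Real.cos ϑ := by rw [hk, div_mul_cancel₀ _ hs]
  have hkc : k * (1 + Real.cos ϑ) = Real.sin ϑ := by
    rw [hk]
    field_simp
    linear_combination -Real.sin_sq_add_cos_sq ϑ
  exact Matrix.inv_one_sub_smul_mul_one_add_smul_of_pow_three_eq_neg hU (by positivity) hks hkc
end

section
/- Let a, b, c, e, f, g be real numbers with a² + b² + c² + e² + f² + g² = 1, write u = (a,b,c) and v = (e,f,g), and regard U₄ = U₄(a,b,c,e,f,g) as a matrix over ℂ. Let λ ∈ ℂ satisfy λ⁴ + λ² + (ae + bf + cg)² = 0. Define the vector x ∈ ℂ⁴ by x₀ = λ·(λ² + (a² + b² + c²)) and (x₁, x₂, x₃) = λ² • v + λ • (u × v) + (ae + bf + cg) • u, where × is the three-dimensional cross product. Then U₄ • x = λ • x. -/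
/-- For real `a,b,c,e,f,g` with `a² + b² + c² + e² + f² + g² = 1`, `u = (a,b,c)`,
`v = (e,f,g)`, and `λ ∈ ℂ` a root of `X⁴ + X² + (ae+bf+cg)²`, the complex vector `x` with
`x₀ = λ·(λ² + (a²+b²+c²))` and `(x₁,x₂,x₃) = λ²•v + λ•(u×v) + (ae+bf+cg)•u` is an
eigenvector of `U₄(a,b,c,e,f,g)` with eigenvalue `λ`. -/
theorem U₄_eigenvector (a b c e f g : ℝ)
    (h : a ^ 2 + b ^ 2 + c ^ 2 + e ^ 2 + f ^ 2 + g ^ 2 = 1)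
    (l : ℂ) (hl : l ^ 4 + l ^ 2 + ((a * e + b * f + c * g : ℝ) : ℂ) ^ 2 = 0)
    (x : Fin 4 → ℂ)
    (hx : x = ![l * (l ^ 2 + ((a : ℂ) ^ 2 + (b : ℂ) ^ 2 + (c : ℂ) ^ 2)),
      l ^ 2 * (e : ℂ) + l * ((b : ℂ) * (g : ℂ) - (c : ℂ) * (f : ℂ))
        + ((a : ℂ) * (e : ℂ) + (b : ℂ) * (f : ℂ) + (c : ℂ) * (g : ℂ)) * (a : ℂ),
      l ^ 2 * (f : ℂ) + l * ((c : ℂ) * (e : ℂ) - (a : ℂ) * (g : ℂ))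
        + ((a : ℂ) * (e : ℂ) + (b : ℂ) * (f : ℂ) + (c : ℂ) * (g : ℂ)) * (b : ℂ),
      l ^ 2 * (g : ℂ) + l * ((a : ℂ) * (f : ℂ) - (b : ℂ) * (e : ℂ))
        + ((a : ℂ) * (e : ℂ) + (b : ℂ) * (f : ℂ) + (c : ℂ) * (g : ℂ)) * (c : ℂ)]) :
    (!![0, -(e : ℂ), -(f : ℂ), -(g : ℂ);
        (e : ℂ), 0, -(c : ℂ), (b : ℂ);
        (f : ℂ), (c : ℂ), 0, -(a : ℂ);
        (g : ℂ), -(b : ℂ), (a : ℂ), 0]).mulVec x = l • x := by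
  have h' : (a:ℂ)^2+(b:ℂ)^2+(c:ℂ)^2+(e:ℂ)^2+(f:ℂ)^2+(g:ℂ)^2 = 1 := by
    exact_mod_cast congrArg (Complex.ofReal) h
  push_cast at hl
  subst hx
  funext i
  fin_cases i <;>
    simp [Matrix.mulVec, dotProduct, Fin.sum_univ_succ] <;>
    ring_nf <;>
    linear_combination -hl - l^2 * h'
end
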